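/- Let u be a factor of the Thue-Morse word 𝕋 which is neither a prefix of 𝕋 nor a prefix of 𝕋̄. Then 𝕋|_u is 2-summable if and only if u is a prefix of τ^n(010) or of τ^n(101) for some n ≥ 0, where τ is the Thue-Morse morphism. -/
import Mathlib


/-- The Thue-Morse word: `TM n` is the sum modulo 2 of the binary digits of `n`. -/
def TM (n : ℕ) : ℕ := (Nat.digits 2 n).sum % 2

/-- The set of occurrences of the finite word `u` in the Thue-Morse word. -/
def TMocc (u : List ℕ) : Set ℕ :=
  {n | u = (List.range u.length).map fun j => TM (n + j)}

/-- `u` is a factor of the Thue-Morse word. -/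
def FactorTM (u : List ℕ) : Prop := (TMocc u).Nonempty

/-- `u` is a prefix of the Thue-Morse word. -/
def PrefixTM (u : List ℕ) : Prop := u = (List.range u.length).map TM

/-- `u` is a prefix of the complement of the Thue-Morse word. -/
def PrefixTMBar (u : List ℕ) : Prop :=
  u = (List.range u.length).map fun j => 1 - TM j

/-- The Thue-Morse morphism `0 ↦ 01`, `1 ↦ 10` extended to words. -/
def tau (w : List ℕ) : List ℕ := w.flatMap fun a => [a, 1 - a]

lemma TM_le_one (n : ℕ) : TM n ≤ 1 := by unfold TM; omega

lemma TM_two_mul (n : ℕ) : TM (2 * n) = TM n := by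
  rcases Nat.eq_zero_or_pos n with h | h
  · simp [h]
  · unfold TM
    rw [Nat.digits_def' (by norm_num : (1:ℕ) < 2) (by omega)]
    have h1 : 2 * n % 2 = 0 := by omega
    have h2 : 2 * n / 2 = n := by omega
    rw [h1, h2, List.sum_cons]
    simp

lemma TM_two_mul_add_one (n : ℕ) : TM (2 * n + 1) = 1 - TM n := by
  unfold TM
  rw [Nat.digits_def' (by norm_num : (1:ℕ) < 2) (by omega)]
  have h1 : (2 * n + 1) % 2 = 1 := by omega
  have h2 : (2 * n + 1) / 2 = n := by omega
  rw [h1, h2, List.sum_cons]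
  omega

lemma TM_even_ne (n : ℕ) : TM (2 * n) ≠ TM (2 * n + 1) := by
  rw [TM_two_mul, TM_two_mul_add_one]
  have := TM_le_one n; omega

lemma eq_succ_odd {m : ℕ} (h : TM m = TM (m + 1)) : m % 2 = 1 := by
  rcases Nat.even_or_odd m with ⟨k, hk⟩ | ⟨k, hk⟩
  · exfalso; apply TM_even_ne k
    rw [show 2 * k = m by omega]
    exact h
  · omega

lemma no3 {m : ℕ} (h1 : TM m = TM (m + 1)) (h2 : TM (m + 1) = TM (m + 2)) : False := by
  have a1 := eq_succ_odd h1
  have a2 := eq_succ_odd (m := m + 1) h2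
  omega

lemma mem_TMocc {u : List ℕ} {n : ℕ} :
    n ∈ TMocc u ↔ ∀ j (h : j < u.length), u[j] = TM (n + j) := by
  constructor
  · intro h j hj
    have hj' : j < ((List.range u.length).map fun j => TM (n + j)).length := by
      simpa using hj
    have := List.getElem_of_eq h (hj)
    simpa using this
  · intro h
    apply List.ext_getElem (by simp)
    intro j h1 h2
    simpa using h j h1

lemma prefix_iff {u v : List ℕ} :
    u <+: v ↔ u.length ≤ v.length ∧
      ∀ j (h : j < u.length) (h' : j < v.length), u[j] = v[j] := by
  constructor
  · rintro ⟨t, rfl⟩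
    refine ⟨by simp, fun j h h' => ?_⟩
    rw [List.getElem_append_left h]
  · rintro ⟨hl, h⟩
    rw [List.prefix_iff_eq_take]
    apply List.ext_getElem (by simp [hl])
    intro j h1 h2
    rw [List.getElem_take]
    exact h j h1 (by omega)

lemma tau_cons (a : ℕ) (w : List ℕ) : tau (a :: w) = a :: (1 - a) :: tau w := by
  simp [tau]

lemma tau_append (v w : List ℕ) : tau (v ++ w) = tau v ++ tau w := by
  simp [tau]

lemma length_tau (w : List ℕ) : (tau w).length = 2 * w.length := by
  induction w with
  | nil => rfl
  | cons a w ih => rw [tau_cons]; simp [ih]; omega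

lemma getElem?_tau_even (w : List ℕ) (i : ℕ) :
    (tau w)[2 * i]? = w[i]? := by
  induction w generalizing i with
  | nil => simp [tau]
  | cons a w ih =>
    cases i with
    | zero => simp [tau_cons]
    | succ i =>
      rw [tau_cons, show 2 * (i + 1) = 2 * i + 1 + 1 by ring]
      simp only [List.getElem?_cons_succ]
      exact ih i

lemma getElem?_tau_odd (w : List ℕ) (i : ℕ) :
    (tau w)[2 * i + 1]? = w[i]?.map (fun a => 1 - a) := by
  induction w generalizing i with
  | nil => simp [tau]
  | cons a w ih =>
    cases i with
    | zero => simp [tau_cons]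
    | succ i =>
      rw [tau_cons, show 2 * (i + 1) + 1 = 2 * i + 1 + 1 + 1 by ring]
      simp only [List.getElem?_cons_succ]
      exact ih i

lemma getElem_tau_even (w : List ℕ) (i : ℕ) (h : i < w.length) :
    (tau w)[2 * i]'(by rw [length_tau]; omega) = w[i] := by
  have h1 : 2 * i < (tau w).length := by rw [length_tau]; omega
  have := getElem?_tau_even w i
  rw [List.getElem?_eq_getElem h1, List.getElem?_eq_getElem h] at this
  exact Option.some_injective _ this

lemma getElem_tau_odd (w : List ℕ) (i : ℕ) (h : i < w.length) :
    (tau w)[2 * i + 1]'(by rw [length_tau]; omega) = 1 - w[i] := by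
  have h1 : 2 * i + 1 < (tau w).length := by rw [length_tau]; omega
  have := getElem?_tau_odd w i
  rw [List.getElem?_eq_getElem h1, List.getElem?_eq_getElem h] at this
  exact Option.some_injective _ (by simpa using this)

/-- the desubstitution of `u`: its letters at even positions -/
def half (u : List ℕ) : List ℕ :=
  (List.range ((u.length + 1) / 2)).map fun i => u.getD (2 * i) 0

lemma length_half (u : List ℕ) : (half u).length = (u.length + 1) / 2 := by
  simp [half]

lemma getElem_half (u : List ℕ) (i : ℕ) (h : i < (half u).length) :
    (half u)[i] = u[2 * i]'(by rw [length_half] at h; omega) := by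
  have h2 : 2 * i < u.length := by rw [length_half] at h; omega
  simp only [half, List.getElem_map, List.getElem_range]
  exact List.getD_eq_getElem _ _ h2

lemma mem_TMocc' {u : List ℕ} {n : ℕ} :
    n ∈ TMocc u ↔ ∀ j, j < u.length → u.getD j 0 = TM (n + j) := by
  rw [mem_TMocc]
  constructor
  · intro h j hj; rw [List.getD_eq_getElem _ _ hj]; exact h j hj
  · intro h j hj; rw [← List.getD_eq_getElem _ _ hj]; exact h j hj

lemma prefix_iff' {u v : List ℕ} :
    u <+: v ↔ u.length ≤ v.length ∧
      ∀ j, j < u.length → u.getD j 0 = v.getD j 0 := by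
  rw [prefix_iff]
  constructor
  · rintro ⟨hl, h⟩
    refine ⟨hl, fun j hj => ?_⟩
    rw [List.getD_eq_getElem _ _ hj, List.getD_eq_getElem _ _ (by omega)]
    exact h j hj (by omega)
  · rintro ⟨hl, h⟩
    refine ⟨hl, fun j hj hj' => ?_⟩
    have := h j hj
    rwa [List.getD_eq_getElem _ _ hj, List.getD_eq_getElem _ _ hj'] at this

lemma prefixTM_iff' {u : List ℕ} :
    PrefixTM u ↔ ∀ j, j < u.length → u.getD j 0 = TM j := by
  unfold PrefixTM
  constructor
  · intro h j hj
    rw [List.getD_eq_getElem _ _ hj]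
    have := List.getElem_of_eq h hj
    simpa using this
  · intro h
    apply List.ext_getElem (by simp)
    intro j h1 h2
    have := h j h1
    rw [List.getD_eq_getElem _ _ h1] at this
    simpa using this

lemma prefixTMBar_iff' {u : List ℕ} :
    PrefixTMBar u ↔ ∀ j, j < u.length → u.getD j 0 = 1 - TM j := by
  unfold PrefixTMBar
  constructor
  · intro h j hj
    rw [List.getD_eq_getElem _ _ hj]
    have := List.getElem_of_eq h hj
    simpa using this
  · intro h
    apply List.ext_getElem (by simp)
    intro j h1 h2
    have := h j h1
    rw [List.getD_eq_getElem _ _ h1] at this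
    simpa using this

lemma factor_le_one {u : List ℕ} (hfac : FactorTM u) : ∀ j, u.getD j 0 ≤ 1 := by
  obtain ⟨n, hn⟩ := hfac
  rw [mem_TMocc'] at hn
  intro j
  by_cases hj : j < u.length
  · rw [hn j hj]; exact TM_le_one _
  · rw [List.getD_eq_default _ _ (by omega)]; omega

lemma getD_half' (u : List ℕ) (i : ℕ) : (half u).getD i 0 = u.getD (2 * i) 0 := by
  by_cases h : i < (half u).length
  · rw [List.getD_eq_getElem _ _ h, getElem_half u i h,
      List.getD_eq_getElem _ _ (by rw [length_half] at h; omega)]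
  · rw [length_half] at h
    rw [List.getD_eq_default _ _ (by rw [length_half]; omega),
      List.getD_eq_default _ _ (by omega)]

lemma getD_tau_even (w : List ℕ) (i : ℕ) :
    (tau w).getD (2 * i) 0 = w.getD i 0 := by
  by_cases h : i < w.length
  · rw [List.getD_eq_getElem _ _ (by rw [length_tau]; omega),
      List.getD_eq_getElem _ _ h]
    exact getElem_tau_even w i h
  · rw [List.getD_eq_default _ _ (by rw [length_tau]; omega),
      List.getD_eq_default _ _ (by omega)]

lemma getD_tau_odd (w : List ℕ) (i : ℕ) (h : i < w.length) :
    (tau w).getD (2 * i + 1) 0 = 1 - w.getD i 0 := by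
  rw [List.getD_eq_getElem _ _ (by rw [length_tau]; omega),
    List.getD_eq_getElem _ _ h]
  exact getElem_tau_odd w i h

lemma occ_tau {w : List ℕ} {m : ℕ} (h : m ∈ TMocc w) : 2 * m ∈ TMocc (tau w) := by
  rw [mem_TMocc'] at h ⊢
  intro j hj
  rw [length_tau] at hj
  by_cases hp : j % 2 = 0
  · obtain ⟨i, rfl⟩ : ∃ i, j = 2 * i := ⟨j / 2, by omega⟩
    rw [getD_tau_even, h i (by omega), show 2 * m + 2 * i = 2 * (m + i) by ring,
      TM_two_mul]
  · obtain ⟨i, rfl⟩ : ∃ i, j = 2 * i + 1 := ⟨j / 2, by omega⟩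
    rw [getD_tau_odd w i (by omega), h i (by omega),
      show 2 * m + (2 * i + 1) = 2 * (m + i) + 1 by ring, TM_two_mul_add_one]

lemma occ_iter {w : List ℕ} {m : ℕ} (h : m ∈ TMocc w) (n : ℕ) :
    2 ^ n * m ∈ TMocc (tau^[n] w) := by
  induction n with
  | zero => simpa using h
  | succ n ih =>
    rw [Function.iterate_succ_apply', show 2 ^ (n + 1) * m = 2 * (2 ^ n * m) by ring]
    exact occ_tau ih

lemma occ_mono {u v : List ℕ} (h : u <+: v) : TMocc v ⊆ TMocc u := by
  intro n hn
  rw [mem_TMocc'] at hn ⊢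
  obtain ⟨hl, hg⟩ := prefix_iff'.1 h
  intro j hj
  rw [hg j hj]
  exact hn j (by omega)

lemma tau_prefix_mono {v w : List ℕ} (h : v <+: w) : tau v <+: tau w := by
  obtain ⟨t, rfl⟩ := h
  exact ⟨tau t, (tau_append v t).symm⟩

section Desub

variable {u : List ℕ} (hle : ∀ j, u.getD j 0 ≤ 1)
  (hne : ∀ j, j + 1 < u.length → j % 2 = 0 → u.getD j 0 ≠ u.getD (j + 1) 0)

include hle hne

lemma desub_occ (m : ℕ) : 2 * m ∈ TMocc u ↔ m ∈ TMocc (half u) := by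
  rw [mem_TMocc', mem_TMocc']
  constructor
  · intro h i hi
    rw [length_half] at hi
    rw [getD_half', h (2 * i) (by omega), show 2 * m + 2 * i = 2 * (m + i) by ring,
      TM_two_mul]
  · intro h j hj
    by_cases hp : j % 2 = 0
    · obtain ⟨i, rfl⟩ : ∃ i, j = 2 * i := ⟨j / 2, by omega⟩
      have hi : i < (half u).length := by rw [length_half]; omega
      have := h i hi
      rw [getD_half'] at this
      rw [this, show 2 * m + 2 * i = 2 * (m + i) by ring, TM_two_mul]
    · obtain ⟨i, rfl⟩ : ∃ i, j = 2 * i + 1 := ⟨j / 2, by omega⟩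
      have hi : i < (half u).length := by rw [length_half]; omega
      have h1 := h i hi
      rw [getD_half'] at h1
      have hne' := hne (2 * i) (by omega) (by omega)
      have l1 := hle (2 * i); have l2 := hle (2 * i + 1)
      have hTM := TM_le_one (m + i)
      rw [show 2 * m + (2 * i + 1) = 2 * (m + i) + 1 by ring, TM_two_mul_add_one]
      omega

lemma u_prefix_tau_half : u <+: tau (half u) := by
  rw [prefix_iff']
  constructor
  · rw [length_tau, length_half]; omega
  · intro j hj
    by_cases hp : j % 2 = 0
    · obtain ⟨i, rfl⟩ : ∃ i, j = 2 * i := ⟨j / 2, by omega⟩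
      rw [getD_tau_even, getD_half']
    · obtain ⟨i, rfl⟩ : ∃ i, j = 2 * i + 1 := ⟨j / 2, by omega⟩
      rw [getD_tau_odd _ i (by rw [length_half]; omega), getD_half']
      have hne' := hne (2 * i) (by omega) (by omega)
      have l1 := hle (2 * i); have l2 := hle (2 * i + 1)
      omega

omit hle hne in
lemma half_prefix {w : List ℕ} (hw : u <+: tau w) : half u <+: w := by
  obtain ⟨hl, hg⟩ := prefix_iff'.1 hw
  rw [length_tau] at hl
  rw [prefix_iff']
  refine ⟨by rw [length_half]; omega, fun i hi => ?_⟩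
  rw [length_half] at hi
  rw [getD_half', hg (2 * i) (by omega), getD_tau_even]

lemma prefixTM_of_half (h : PrefixTM (half u)) : PrefixTM u := by
  rw [prefixTM_iff'] at h ⊢
  intro j hj
  by_cases hp : j % 2 = 0
  · obtain ⟨i, rfl⟩ : ∃ i, j = 2 * i := ⟨j / 2, by omega⟩
    have := h i (by rw [length_half]; omega)
    rw [getD_half'] at this
    rw [this, TM_two_mul]
  · obtain ⟨i, rfl⟩ : ∃ i, j = 2 * i + 1 := ⟨j / 2, by omega⟩
    have := h i (by rw [length_half]; omega)
    rw [getD_half'] at this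
    have hne' := hne (2 * i) (by omega) (by omega)
    have l1 := hle (2 * i); have l2 := hle (2 * i + 1)
    have hTM := TM_le_one i
    rw [TM_two_mul_add_one]
    omega

lemma prefixTMBar_of_half (h : PrefixTMBar (half u)) : PrefixTMBar u := by
  rw [prefixTMBar_iff'] at h ⊢
  intro j hj
  by_cases hp : j % 2 = 0
  · obtain ⟨i, rfl⟩ : ∃ i, j = 2 * i := ⟨j / 2, by omega⟩
    have := h i (by rw [length_half]; omega)
    rw [getD_half'] at this
    rw [this, TM_two_mul]
  · obtain ⟨i, rfl⟩ : ∃ i, j = 2 * i + 1 := ⟨j / 2, by omega⟩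
    have := h i (by rw [length_half]; omega)
    rw [getD_half'] at this
    have hne' := hne (2 * i) (by omega) (by omega)
    have l1 := hle (2 * i); have l2 := hle (2 * i + 1)
    have hTM := TM_le_one i
    rw [TM_two_mul_add_one]
    omega

end Desub

lemma length_tau_iter (w : List ℕ) (n : ℕ) : (tau^[n] w).length = 2 ^ n * w.length := by
  induction n with
  | zero => simp
  | succ n ih => rw [Function.iterate_succ_apply', length_tau, ih]; ring

lemma iter010_head (n : ℕ) : (tau^[n] [0, 1, 0]).getD 0 0 = 0 := by
  induction n with
  | zero => rfl
  | succ n ih =>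
    rw [Function.iterate_succ_apply']
    have := getD_tau_even (tau^[n] [0, 1, 0]) 0
    rw [show 2 * 0 = 0 by norm_num] at this
    rw [this, ih]

lemma iter101_head (n : ℕ) : (tau^[n] [1, 0, 1]).getD 0 0 = 1 := by
  induction n with
  | zero => rfl
  | succ n ih =>
    rw [Function.iterate_succ_apply']
    have := getD_tau_even (tau^[n] [1, 0, 1]) 0
    rw [show 2 * 0 = 0 by norm_num] at this
    rw [this, ih]

lemma iter010_snd (n : ℕ) : (tau^[n] [0, 1, 0]).getD 1 0 = 1 := by
  induction n with
  | zero => rfl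
  | succ n ih =>
    rw [Function.iterate_succ_apply']
    have := getD_tau_odd (tau^[n] [0, 1, 0]) 0
      (by rw [length_tau_iter]; exact Nat.mul_pos (Nat.two_pow_pos n) (by norm_num))
    rw [show 2 * 0 + 1 = 1 by norm_num] at this
    rw [this, iter010_head]

lemma iter101_snd (n : ℕ) : (tau^[n] [1, 0, 1]).getD 1 0 = 0 := by
  induction n with
  | zero => rfl
  | succ n ih =>
    rw [Function.iterate_succ_apply']
    have := getD_tau_odd (tau^[n] [1, 0, 1]) 0
      (by rw [length_tau_iter]; exact Nat.mul_pos (Nat.two_pow_pos n) (by norm_num))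
    rw [show 2 * 0 + 1 = 1 by norm_num] at this
    rw [this, iter101_head]

lemma iter010_third (n : ℕ) : (tau^[n + 1] [0, 1, 0]).getD 2 0 = 1 := by
  rw [Function.iterate_succ_apply']
  have := getD_tau_even (tau^[n] [0, 1, 0]) 1
  rw [show 2 * 1 = 2 by norm_num] at this
  rw [this, iter010_snd]

lemma iter101_third (n : ℕ) : (tau^[n + 1] [1, 0, 1]).getD 2 0 = 0 := by
  rw [Function.iterate_succ_apply']
  have := getD_tau_even (tau^[n] [1, 0, 1]) 1
  rw [show 2 * 1 = 2 by norm_num] at this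
  rw [this, iter101_snd]

lemma no_even_square_prefix_tau {u w : List ℕ} (h : u <+: tau w) {j : ℕ}
    (hj : j + 1 < u.length) (hj2 : j % 2 = 0)
    (hsq : u.getD j 0 = u.getD (j + 1) 0) : False := by
  obtain ⟨hl, hg⟩ := prefix_iff'.1 h
  rw [length_tau] at hl
  obtain ⟨i, rfl⟩ : ∃ i, j = 2 * i := ⟨j / 2, by omega⟩
  have g1 := hg (2 * i) (by omega)
  have g2 := hg (2 * i + 1) hj
  rw [getD_tau_even] at g1
  rw [getD_tau_odd w i (by omega)] at g2
  omega

theorem aux (L : ℕ) : ∀ u : List ℕ, u.length ≤ L → FactorTM u → ¬PrefixTM u →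
    ¬PrefixTMBar u →
    ((∃ x1 x2 : ℕ, 0 < x1 ∧ 0 < x2 ∧ x1 ≠ x2 ∧ x1 ≠ x1 + x2 ∧ x2 ≠ x1 + x2 ∧
      x1 ∈ TMocc u ∧ x2 ∈ TMocc u ∧ x1 + x2 ∈ TMocc u) ↔
    (∃ n : ℕ, u <+: tau^[n] [0, 1, 0] ∨ u <+: tau^[n] [1, 0, 1])) := by
  induction L with
  | zero =>
    intro u hlen _ h1 _
    exfalso
    apply h1
    have : u = [] := List.eq_nil_of_length_eq_zero (by omega)
    subst this
    rfl
  | succ L ih =>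
    intro u hlen hfac h1 h2
    have hle := factor_le_one hfac
    by_cases hA : ∃ j, j + 1 < u.length ∧ j % 2 = 0 ∧ u.getD j 0 = u.getD (j + 1) 0
    · obtain ⟨j, hj, hj2, hsq⟩ := hA
      constructor
      · rintro ⟨x1, x2, p1, p2, p12, _, _, m1, m2, m3⟩
        exfalso
        have key : ∀ n, n ∈ TMocc u → n % 2 = 1 := by
          intro n hn
          rw [mem_TMocc'] at hn
          have e1 := hn j (by omega)
          have e2 := hn (j + 1) (by omega)
          rw [← Nat.add_assoc] at e2
          have heq : TM (n + j) = TM (n + j + 1) := by rw [← e1, ← e2, hsq]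
          have := eq_succ_odd heq
          omega
        have o1 := key _ m1; have o2 := key _ m2; have o3 := key _ m3
        omega
      · rintro ⟨n, hp | hp⟩ <;> exfalso
        · cases n with
          | zero =>
            simp only [Function.iterate_zero, id_eq] at hp
            obtain ⟨hl, hg⟩ := prefix_iff'.1 hp
            simp at hl
            obtain rfl : j = 0 := by omega
            have e0 := hg 0 (by omega)
            have e1 := hg 1 (by omega)
            simp at e0 e1
            norm_num at hsq
            omega
          | succ n =>
            rw [Function.iterate_succ_apply'] at hp
            exact no_even_square_prefix_tau hp hj hj2 hsq
        · cases n with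
          | zero =>
            simp only [Function.iterate_zero, id_eq] at hp
            obtain ⟨hl, hg⟩ := prefix_iff'.1 hp
            simp at hl
            obtain rfl : j = 0 := by omega
            have e0 := hg 0 (by omega)
            have e1 := hg 1 (by omega)
            simp at e0 e1
            norm_num at hsq
            omega
          | succ n =>
            rw [Function.iterate_succ_apply'] at hp
            exact no_even_square_prefix_tau hp hj hj2 hsq
    · push_neg at hA
      by_cases hB : ∃ j, j + 1 < u.length ∧ j % 2 = 1 ∧ u.getD j 0 = u.getD (j + 1) 0
      · obtain ⟨j0, hj0, hj0odd, hsq⟩ := hB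
        have hL3 : 3 ≤ u.length := by omega
        have heven : ∀ n, n ∈ TMocc u → n % 2 = 0 := by
          intro n hn
          rw [mem_TMocc'] at hn
          have e1 := hn j0 (by omega)
          have e2 := hn (j0 + 1) (by omega)
          rw [← Nat.add_assoc] at e2
          have heq : TM (n + j0) = TM (n + j0 + 1) := by rw [← e1, ← e2, hsq]
          have := eq_succ_odd heq
          omega
        have hdes : ∀ m, 2 * m ∈ TMocc u ↔ m ∈ TMocc (half u) := desub_occ hle hA
        have hfac' : FactorTM (half u) := by
          obtain ⟨n, hn⟩ := hfac
          obtain ⟨m, rfl⟩ : ∃ m, n = 2 * m := ⟨n / 2, by have := heven n hn; omega⟩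
          exact ⟨m, (hdes m).1 hn⟩
        have hpre : u <+: tau (half u) := u_prefix_tau_half hle hA
        have IH := ih (half u) (by rw [length_half]; omega) hfac'
          (fun hp => h1 (prefixTM_of_half hle hA hp))
          (fun hp => h2 (prefixTMBar_of_half hle hA hp))
        constructor
        · rintro ⟨x1, x2, p1, p2, p12, _, _, m1, m2, m3⟩
          obtain ⟨y1, rfl⟩ : ∃ y, x1 = 2 * y := ⟨x1 / 2, by have := heven _ m1; omega⟩
          obtain ⟨y2, rfl⟩ : ∃ y, x2 = 2 * y := ⟨x2 / 2, by have := heven _ m2; omega⟩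
          rw [show 2 * y1 + 2 * y2 = 2 * (y1 + y2) by ring] at m3
          obtain ⟨n, hn⟩ := IH.1 ⟨y1, y2, by omega, by omega, by omega, by omega, by omega,
            (hdes y1).1 m1, (hdes y2).1 m2, (hdes (y1 + y2)).1 m3⟩
          rcases hn with hn | hn
          · exact ⟨n + 1, Or.inl (by
              rw [Function.iterate_succ_apply']
              exact hpre.trans (tau_prefix_mono hn))⟩
          · exact ⟨n + 1, Or.inr (by
              rw [Function.iterate_succ_apply']
              exact hpre.trans (tau_prefix_mono hn))⟩
        · rintro ⟨n, hn⟩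
          cases n with
          | zero =>
            exfalso
            simp only [Function.iterate_zero, id_eq] at hn
            obtain rfl : j0 = 1 := by
              rcases hn with hn | hn <;>
              · obtain ⟨hl, _⟩ := prefix_iff'.1 hn
                simp at hl
                omega
            norm_num at hsq
            rcases hn with hn | hn <;>
            · obtain ⟨hl, hg⟩ := prefix_iff'.1 hn
              have e1 := hg 1 (by omega)
              have e2 := hg 2 (by omega)
              simp at e1 e2
              omega
          | succ n =>
            obtain ⟨y1, y2, p1, p2, p12, _, _, m1, m2, m3⟩ := IH.2 ⟨n, by
              rcases hn with hn | hn
              · rw [Function.iterate_succ_apply'] at hn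
                exact Or.inl (half_prefix hn)
              · rw [Function.iterate_succ_apply'] at hn
                exact Or.inr (half_prefix hn)⟩
            refine ⟨2 * y1, 2 * y2, by omega, by omega, by omega, by omega, by omega,
              (hdes y1).2 m1, (hdes y2).2 m2, ?_⟩
            rw [show 2 * y1 + 2 * y2 = 2 * (y1 + y2) by ring]
            exact (hdes (y1 + y2)).2 m3
      · push_neg at hB
        have hnn : ∀ j, j + 1 < u.length → u.getD j 0 ≠ u.getD (j + 1) 0 := by
          intro j hjj
          rcases Nat.even_or_odd j with he | ho
          · exact hA j hjj (Nat.even_iff.1 he)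
          · exact hB j hjj (Nat.odd_iff.1 ho)
        by_cases hL5 : 5 ≤ u.length
        · exfalso
          obtain ⟨n, hn⟩ := hfac
          rw [mem_TMocc'] at hn
          have q0 := hn 0 (by omega); have q1 := hn 1 (by omega)
          have q2 := hn 2 (by omega); have q3 := hn 3 (by omega)
          have q4 := hn 4 (by omega)
          rw [Nat.add_zero] at q0
          have d0 := hnn 0 (by omega); have d1 := hnn 1 (by omega)
          have d2 := hnn 2 (by omega); have d3 := hnn 3 (by omega)
          rw [show 0 + 1 = 1 by norm_num] at d0
          rw [show 1 + 1 = 2 by norm_num] at d1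
          rw [show 2 + 1 = 3 by norm_num] at d2
          rw [show 3 + 1 = 4 by norm_num] at d3
          rw [q0, q1] at d0; rw [q1, q2] at d1; rw [q2, q3] at d2; rw [q3, q4] at d3
          have b0 := TM_le_one n; have b1 := TM_le_one (n + 1)
          have b2 := TM_le_one (n + 2); have b3 := TM_le_one (n + 3)
          have b4 := TM_le_one (n + 4)
          have e1 : TM n = TM (n + 2) := by omega
          have e2 : TM (n + 2) = TM (n + 4) := by omega
          have hpar : (∃ m, n = 2 * m) ∨ ∃ m, n = 2 * m + 1 := by
            rcases Nat.even_or_odd n with ⟨m, hm⟩ | ⟨m, hm⟩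
            · exact Or.inl ⟨m, by omega⟩
            · exact Or.inr ⟨m, by omega⟩
          rcases hpar with ⟨m, rfl⟩ | ⟨m, rfl⟩
          · rw [show 2 * m + 2 = 2 * (m + 1) by ring] at e1 e2
            rw [show 2 * m + 4 = 2 * (m + 2) by ring] at e2
            rw [TM_two_mul, TM_two_mul] at e1
            rw [TM_two_mul, TM_two_mul] at e2
            exact no3 e1 e2
          · rw [show 2 * m + 1 + 2 = 2 * (m + 1) + 1 by ring] at e1 e2
            rw [show 2 * m + 1 + 4 = 2 * (m + 2) + 1 by ring] at e2
            rw [TM_two_mul_add_one, TM_two_mul_add_one] at e1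
            rw [TM_two_mul_add_one, TM_two_mul_add_one] at e2
            have c0 := TM_le_one m; have c1 := TM_le_one (m + 1)
            have c2 := TM_le_one (m + 2)
            exact no3 (m := m) (by omega) (by omega)
        · rcases u with _ | ⟨a, u⟩
          · exact absurd rfl h1
          rcases u with _ | ⟨b, u⟩
          · have ha : a ≤ 1 := by simpa using hle 0
            rcases (by omega : a = 0 ∨ a = 1) with rfl | rfl
            · refine absurd ?_ h1
              rw [prefixTM_iff']
              intro j hj
              simp at hj
              subst hj
              norm_num [TM]
            · refine absurd ?_ h2
              rw [prefixTMBar_iff']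
              intro j hj
              simp at hj
              subst hj
              norm_num [TM]
          rcases u with _ | ⟨c, u⟩
          · have ha : a ≤ 1 := by simpa using hle 0
            have hb : b ≤ 1 := by simpa using hle 1
            have hab : a ≠ b := by simpa using hnn 0 (by norm_num)
            rcases (by omega : a = 0 ∧ b = 1 ∨ a = 1 ∧ b = 0) with ⟨rfl, rfl⟩ | ⟨rfl, rfl⟩
            · refine absurd ?_ h1
              rw [prefixTM_iff']
              intro j hj
              simp at hj
              interval_cases j <;> norm_num [TM]
            · refine absurd ?_ h2
              rw [prefixTMBar_iff']
              intro j hj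
              simp at hj
              interval_cases j <;> norm_num [TM]
          rcases u with _ | ⟨d, u⟩
          · have ha : a ≤ 1 := by simpa using hle 0
            have hb : b ≤ 1 := by simpa using hle 1
            have hc : c ≤ 1 := by simpa using hle 2
            have hab : a ≠ b := by simpa using hnn 0 (by norm_num)
            have hbc : b ≠ c := by simpa using hnn 1 (by norm_num)
            rcases (by omega : a = 0 ∧ b = 1 ∧ c = 0 ∨ a = 1 ∧ b = 0 ∧ c = 1) with
              ⟨rfl, rfl, rfl⟩ | ⟨rfl, rfl, rfl⟩
            · constructor
              · intro _
                exact ⟨0, Or.inl (by rw [Function.iterate_zero_apply])⟩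
              · intro _
                refine ⟨3, 15, by norm_num, by norm_num, by norm_num, by norm_num,
                  by norm_num, ?_, ?_, ?_⟩ <;>
                · rw [mem_TMocc']
                  intro j hj
                  simp at hj
                  interval_cases j <;> norm_num [TM]
            · constructor
              · intro _
                exact ⟨0, Or.inr (by rw [Function.iterate_zero_apply])⟩
              · intro _
                refine ⟨35, 47, by norm_num, by norm_num, by norm_num, by norm_num,
                  by norm_num, ?_, ?_, ?_⟩ <;>
                · rw [mem_TMocc']
                  intro j hj
                  simp at hj
                  interval_cases j <;> norm_num [TM]
          rcases u with _ | ⟨e, u⟩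
          · have ha : a ≤ 1 := by simpa using hle 0
            have hb : b ≤ 1 := by simpa using hle 1
            have hc : c ≤ 1 := by simpa using hle 2
            have hd : d ≤ 1 := by simpa using hle 3
            have hab : a ≠ b := by simpa using hnn 0 (by norm_num)
            have hbc : b ≠ c := by simpa using hnn 1 (by norm_num)
            have hcd : c ≠ d := by simpa using hnn 2 (by norm_num)
            rcases (by omega : a = 0 ∧ b = 1 ∧ c = 0 ∧ d = 1 ∨
                a = 1 ∧ b = 0 ∧ c = 1 ∧ d = 0) with
              ⟨rfl, rfl, rfl, rfl⟩ | ⟨rfl, rfl, rfl, rfl⟩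
            · constructor
              · rintro ⟨x1, x2, p1, p2, p12, _, _, m1, m2, m3⟩
                exfalso
                have key : ∀ n, n ∈ TMocc ([0, 1, 0, 1] : List ℕ) → n % 4 = 2 := by
                  intro n hn
                  rw [mem_TMocc'] at hn
                  have q0 := hn 0 (by norm_num); have q1 := hn 1 (by norm_num)
                  have q2 := hn 2 (by norm_num); have q3 := hn 3 (by norm_num)
                  rw [Nat.add_zero] at q0
                  simp at q0 q1 q2 q3
                  have hpar : (∃ m, n = 2 * m) ∨ ∃ m, n = 2 * m + 1 := by
                    rcases Nat.even_or_odd n with ⟨m, hm⟩ | ⟨m, hm⟩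
                    · exact Or.inl ⟨m, by omega⟩
                    · exact Or.inr ⟨m, by omega⟩
                  rcases hpar with ⟨m, rfl⟩ | ⟨m, rfl⟩
                  · have t0 := TM_two_mul m
                    rw [show 2 * m + 2 = 2 * (m + 1) by ring] at q2
                    have t1 := TM_two_mul (m + 1)
                    have := eq_succ_odd (show TM m = TM (m + 1) by omega)
                    omega
                  · have o0 := TM_two_mul_add_one m
                    have c0 := TM_le_one m
                    rw [show 2 * m + 1 + 1 = 2 * (m + 1) by ring] at q1
                    rw [show 2 * m + 1 + 3 = 2 * (m + 2) by ring] at q3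
                    have t1 := TM_two_mul (m + 1)
                    have t2 := TM_two_mul (m + 2)
                    exact (no3 (m := m) (by omega) (by omega)).elim
                have o1 := key _ m1; have o2 := key _ m2; have o3 := key _ m3
                omega
              · intro h
                exfalso
                obtain ⟨n, hp | hp⟩ := h
                · cases n with
                  | zero =>
                    rw [Function.iterate_zero_apply] at hp
                    obtain ⟨hl, _⟩ := prefix_iff'.1 hp
                    simp at hl
                  | succ n =>
                    obtain ⟨hl, hg⟩ := prefix_iff'.1 hp
                    have e := hg 2 (by norm_num)
                    rw [iter010_third] at e
                    simp at e
                · obtain ⟨hl, hg⟩ := prefix_iff'.1 hp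
                  have e := hg 0 (by norm_num)
                  rw [iter101_head] at e
                  simp at e
            · constructor
              · rintro ⟨x1, x2, p1, p2, p12, _, _, m1, m2, m3⟩
                exfalso
                have key : ∀ n, n ∈ TMocc ([1, 0, 1, 0] : List ℕ) → n % 4 = 2 := by
                  intro n hn
                  rw [mem_TMocc'] at hn
                  have q0 := hn 0 (by norm_num); have q1 := hn 1 (by norm_num)
                  have q2 := hn 2 (by norm_num); have q3 := hn 3 (by norm_num)
                  rw [Nat.add_zero] at q0
                  simp at q0 q1 q2 q3
                  have hpar : (∃ m, n = 2 * m) ∨ ∃ m, n = 2 * m + 1 := by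
                    rcases Nat.even_or_odd n with ⟨m, hm⟩ | ⟨m, hm⟩
                    · exact Or.inl ⟨m, by omega⟩
                    · exact Or.inr ⟨m, by omega⟩
                  rcases hpar with ⟨m, rfl⟩ | ⟨m, rfl⟩
                  · have t0 := TM_two_mul m
                    rw [show 2 * m + 2 = 2 * (m + 1) by ring] at q2
                    have t1 := TM_two_mul (m + 1)
                    have := eq_succ_odd (show TM m = TM (m + 1) by omega)
                    omega
                  · have o0 := TM_two_mul_add_one m
                    have c0 := TM_le_one m
                    rw [show 2 * m + 1 + 1 = 2 * (m + 1) by ring] at q1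
                    rw [show 2 * m + 1 + 3 = 2 * (m + 2) by ring] at q3
                    have t1 := TM_two_mul (m + 1)
                    have t2 := TM_two_mul (m + 2)
                    exact (no3 (m := m) (by omega) (by omega)).elim
                have o1 := key _ m1; have o2 := key _ m2; have o3 := key _ m3
                omega
              · intro h
                exfalso
                obtain ⟨n, hp | hp⟩ := h
                · obtain ⟨hl, hg⟩ := prefix_iff'.1 hp
                  have e := hg 0 (by norm_num)
                  rw [iter010_head] at e
                  simp at e
                · cases n with
                  | zero =>
                    rw [Function.iterate_zero_apply] at hp
                    obtain ⟨hl, _⟩ := prefix_iff'.1 hp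
                    simp at hl
                  | succ n =>
                    obtain ⟨hl, hg⟩ := prefix_iff'.1 hp
                    have e := hg 2 (by norm_num)
                    rw [iter101_third] at e
                    simp at e
          · exfalso
            apply hL5
            simp only [List.length_cons]
            omega

/-- If `u` is a factor of the Thue-Morse word which is neither a prefix of `𝕋`
nor of `𝕋̄`, then `𝕋|_u` is `2`-summable if and only if `u` is a prefix of
`τ^n(010)` or of `τ^n(101)` for some `n ≥ 0`. -/
theorem tm_factor_two_summable_iff (u : List ℕ) (hfac : FactorTM u)
    (h1 : ¬ PrefixTM u) (h2 : ¬ PrefixTMBar u) :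
    (∃ x1 x2 : ℕ, 0 < x1 ∧ 0 < x2 ∧ x1 ≠ x2 ∧ x1 ≠ x1 + x2 ∧ x2 ≠ x1 + x2 ∧
      x1 ∈ TMocc u ∧ x2 ∈ TMocc u ∧ x1 + x2 ∈ TMocc u) ↔
    (∃ n : ℕ, u <+: tau^[n] [0, 1, 0] ∨ u <+: tau^[n] [1, 0, 1]) := by
  exact aux u.length u le_rfl hfac h1 h2
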